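/- arXiv:1812.07553 — 3 statements merged into one kernel-verified Lean document; each statement's English description precedes it below -/
import Mathlib

section
/- Let k be a weight of class 𝒦^λ and δ > 0. Then for every ξ ∈ ℝⁿ one has k(ξ) ≤ k_δ(ξ) ≤ C_δ · k(ξ), where C_δ = sup_{η ∈ ℝⁿ} exp(λ|η|^{1/σ} − δ|η|) is finite; in particular k_δ(ξ) is finite and positive for every ξ. -/
/-!
The weight condition with shift `-η` gives, termwise,
`exp (-δ|η|) k(ξ - η) ≤ exp (λ|η|^{1/σ} - δ|η|) k(ξ)`, and the right-hand factor is bounded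
because `|η|^{1/σ}` grows sublinearly; the term `η = 0` gives the lower bound `k(ξ)`.
-/

open Real Set

theorem exists_mul_rpow_le_add_mul {a c δ : ℝ} (ha₀ : 0 ≤ a) (ha₁ : a < 1) (hc : 0 ≤ c)
    (hδ : 0 < δ) : ∃ B, ∀ t, 0 ≤ t → c * t ^ a ≤ B + δ * t := by
  set T := (c / δ) ^ (1 - a)⁻¹
  have hT : 0 ≤ T := by positivity
  refine ⟨c * T ^ a, fun t ht => ?_⟩
  rcases le_or_gt t T with htT | hTt
  · have : c * t ^ a ≤ c * T ^ a := by gcongr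
    linarith [mul_nonneg hδ.le ht]
  -- past `T`, the linear term dominates: `c / δ = T ^ (1 - a) ≤ t ^ (1 - a)`
  have ht₀ : 0 < t := hT.trans_lt hTt
  have hcδ : c / δ ≤ t ^ (1 - a) :=
    calc c / δ = T ^ (1 - a) := (rpow_inv_rpow (by positivity) (by linarith)).symm
      _ ≤ t ^ (1 - a) := by gcongr
  have : c * t ^ a ≤ δ * t :=
    calc c * t ^ a = δ * (c / δ) * t ^ a := by field_simp
      _ ≤ δ * t ^ (1 - a) * t ^ a := by gcongr
      _ = δ * t := by rw [mul_assoc, ← rpow_add ht₀, sub_add_cancel, rpow_one]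
  linarith [mul_nonneg hc (rpow_nonneg hT a)]

section Weight

variable {E : Type*} [SeminormedAddCommGroup E]

theorem bddAbove_range_exp_mul_norm_rpow_sub {a c δ : ℝ} (ha₀ : 0 ≤ a) (ha₁ : a < 1)
    (hc : 0 ≤ c) (hδ : 0 < δ) :
    BddAbove (range fun η : E => exp (c * ‖η‖ ^ a - δ * ‖η‖)) := by
  obtain ⟨B, hB⟩ := exists_mul_rpow_le_add_mul ha₀ ha₁ hc hδ
  refine ⟨exp B, forall_mem_range.2 fun η => exp_le_exp.2 ?_⟩
  linarith [hB ‖η‖ (norm_nonneg η)]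

theorem iSup_exp_sub_pos {φ : ℝ → ℝ} {δ : ℝ}
    (hφ : BddAbove (range fun η : E => exp (φ ‖η‖ - δ * ‖η‖))) :
    0 < ⨆ η : E, exp (φ ‖η‖ - δ * ‖η‖) :=
  lt_of_lt_of_le (exp_pos _) (le_ciSup hφ 0)

/-- The regularization `k_δ` of a weight `k`. -/
noncomputable def expRegularize (δ : ℝ) (k : E → ℝ) (ξ : E) : ℝ :=
  ⨆ η, exp (-δ * ‖η‖) * k (ξ - η)

variable {k : E → ℝ} {φ : ℝ → ℝ} {δ : ℝ}

theorem exp_mul_sub_le_exp_mul (hk : ∀ ξ η, k (ξ + η) ≤ exp (φ ‖ξ‖) * k η) (ξ η : E) :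
    exp (-δ * ‖η‖) * k (ξ - η) ≤ exp (φ ‖η‖ - δ * ‖η‖) * k ξ :=
  calc exp (-δ * ‖η‖) * k (ξ - η) = exp (-δ * ‖η‖) * k (-η + ξ) := by rw [neg_add_eq_sub]
    _ ≤ exp (-δ * ‖η‖) * (exp (φ ‖η‖) * k ξ) := by
        gcongr
        simpa only [norm_neg] using hk (-η) ξ
    _ = exp (φ ‖η‖ - δ * ‖η‖) * k ξ := by
        rw [show φ ‖η‖ - δ * ‖η‖ = -δ * ‖η‖ + φ ‖η‖ by ring, exp_add]; ring

theorem exp_mul_sub_le_iSup_mul (hk : ∀ ξ η, k (ξ + η) ≤ exp (φ ‖ξ‖) * k η)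
    (hφ : BddAbove (range fun η : E => exp (φ ‖η‖ - δ * ‖η‖))) {ξ : E} (hξ : 0 ≤ k ξ) (η : E) :
    exp (-δ * ‖η‖) * k (ξ - η) ≤ (⨆ η : E, exp (φ ‖η‖ - δ * ‖η‖)) * k ξ :=
  (exp_mul_sub_le_exp_mul hk ξ η).trans <| by gcongr; exact le_ciSup hφ η

theorem expRegularize_le (hk : ∀ ξ η, k (ξ + η) ≤ exp (φ ‖ξ‖) * k η)
    (hφ : BddAbove (range fun η : E => exp (φ ‖η‖ - δ * ‖η‖))) {ξ : E} (hξ : 0 ≤ k ξ) :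
    expRegularize δ k ξ ≤ (⨆ η : E, exp (φ ‖η‖ - δ * ‖η‖)) * k ξ :=
  ciSup_le (exp_mul_sub_le_iSup_mul hk hφ hξ)

theorem le_expRegularize (hk : ∀ ξ η, k (ξ + η) ≤ exp (φ ‖ξ‖) * k η)
    (hφ : BddAbove (range fun η : E => exp (φ ‖η‖ - δ * ‖η‖))) {ξ : E} (hξ : 0 ≤ k ξ) :
    k ξ ≤ expRegularize δ k ξ := by
  refine le_ciSup_of_le ⟨_, forall_mem_range.2 (exp_mul_sub_le_iSup_mul hk hφ hξ)⟩ 0 ?_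
  simp

end Weight

theorem stmt_1_general (n : ℕ) (σ lam δ : ℝ) (hσ : 1 < σ) (hlam : 0 < lam)
    (hδ : 0 < δ) (k : EuclideanSpace ℝ (Fin n) → ℝ)
    (hkpos : ∀ ξ, 0 < k ξ)
    (hk : ∀ ξ η, k (ξ + η) ≤ Real.exp (lam * ‖ξ‖ ^ (1 / σ)) * k η) :
    (0 < ⨆ η : EuclideanSpace ℝ (Fin n), Real.exp (lam * ‖η‖ ^ (1 / σ) - δ * ‖η‖)) ∧
    ∀ ξ : EuclideanSpace ℝ (Fin n),
      k ξ ≤ (⨆ η, Real.exp (-δ * ‖η‖) * k (ξ - η)) ∧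
      (⨆ η, Real.exp (-δ * ‖η‖) * k (ξ - η)) ≤
        (⨆ η : EuclideanSpace ℝ (Fin n), Real.exp (lam * ‖η‖ ^ (1 / σ) - δ * ‖η‖)) * k ξ ∧
      0 < (⨆ η, Real.exp (-δ * ‖η‖) * k (ξ - η)) := by
  let φ : ℝ → ℝ := fun t => lam * t ^ (1 / σ)
  have hφ : BddAbove (range fun η : EuclideanSpace ℝ (Fin n) => exp (φ ‖η‖ - δ * ‖η‖)) :=
    bddAbove_range_exp_mul_norm_rpow_sub (by positivity) ((div_lt_one (by linarith)).2 hσ)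
      hlam.le hδ
  refine ⟨iSup_exp_sub_pos hφ, fun ξ => ?_⟩
  have hlower : k ξ ≤ expRegularize δ k ξ := le_expRegularize hk hφ (hkpos ξ).le
  exact ⟨hlower, expRegularize_le hk hφ (hkpos ξ).le, (hkpos ξ).trans_le hlower⟩

theorem stmt_1 (n : ℕ) (hn : 1 ≤ n) (σ lam δ : ℝ) (hσ : 1 < σ) (hlam : 0 < lam)
    (hδ : 0 < δ) (k : EuclideanSpace ℝ (Fin n) → ℝ)
    (hkpos : ∀ ξ, 0 < k ξ)
    (hk : ∀ ξ η, k (ξ + η) ≤ Real.exp (lam * ‖ξ‖ ^ (1 / σ)) * k η) :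
    (0 < ⨆ η : EuclideanSpace ℝ (Fin n), Real.exp (lam * ‖η‖ ^ (1 / σ) - δ * ‖η‖)) ∧
    ∀ ξ : EuclideanSpace ℝ (Fin n),
      k ξ ≤ (⨆ η, Real.exp (-δ * ‖η‖) * k (ξ - η)) ∧
      (⨆ η, Real.exp (-δ * ‖η‖) * k (ξ - η)) ≤
        (⨆ η : EuclideanSpace ℝ (Fin n), Real.exp (lam * ‖η‖ ^ (1 / σ) - δ * ‖η‖)) * k ξ ∧
      0 < (⨆ η, Real.exp (-δ * ‖η‖) * k (ξ - η)) :=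
  stmt_1_general n σ lam δ hσ hlam hδ k hkpos hk
end

section
/- Let λ > 0 and let k be a weight of class 𝒦^λ, and let δ > 0. Then there exist a weight k_δ of class 𝒦^λ and a constant C_δ > 0 such that for every ξ ∈ ℝⁿ: (1) 1 ≤ k_δ(ξ)/k(ξ) ≤ C_δ, and (2) 1 ≤ M_{k_δ}(ξ) ≤ exp(δ|ξ|). -/
/-!
Replace `k` by `k_δ ξ = sup_ζ k ζ · exp (-δ‖ξ - ζ‖)`. Since `λ t^{1/σ} ≤ δ t + B` for all `t ≥ 0`,
`k_δ` is squeezed between `k` and `e^B k`; it inherits moderateness from `k`, and its logarithm is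
`δ`-Lipschitz, which bounds `M_{k_δ}(ξ)` by `e^{δ‖ξ‖}`. Conversely, if `M_{k_δ}(ξ) = S < 1`, then
`k_δ (m ξ) ≤ S^m k_δ 0` decays exponentially in `m`, while moderateness only allows the
subexponential decay `k_δ (m ξ) ≥ e^{-λ (m‖ξ‖)^{1/σ}} k_δ 0`.
-/

open Real Set Filter Topology

theorem exists_mul_rpow_le_mul_add {a c ε : ℝ} (ha0 : 0 ≤ a) (ha1 : a < 1) (hc : 0 ≤ c)
    (hε : 0 < ε) : ∃ B, ∀ t, 0 ≤ t → c * t ^ a ≤ ε * t + B := by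
  have hlim : Tendsto (fun R : ℝ => c * R ^ (a - 1)) atTop (𝓝 0) := by
    simpa [neg_sub] using (tendsto_rpow_neg_atTop (y := 1 - a) (by linarith)).const_mul c
  obtain ⟨R, hRε, hR⟩ :=
    ((hlim.eventually (gt_mem_nhds hε)).and (eventually_gt_atTop 0)).exists
  refine ⟨c * R ^ a, fun t ht => ?_⟩
  rcases le_total t R with htR | hRt
  · have := mul_le_mul_of_nonneg_left (rpow_le_rpow ht htR ha0) hc
    nlinarith
  · have hpow : t ^ a ≤ R ^ (a - 1) * t := by
      rw [← sub_add_cancel a 1, rpow_add_one (hR.trans_le hRt).ne', sub_add_cancel]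
      exact mul_le_mul_of_nonneg_right (rpow_le_rpow_of_nonpos hR hRt (by linarith)) ht
    have := mul_le_mul_of_nonneg_left hpow hc
    nlinarith [rpow_nonneg hR.le a]

theorem one_le_of_forall_one_le_exp_mul_rpow_mul_pow {a c S : ℝ} (ha0 : 0 ≤ a) (ha1 : a < 1)
    (hc : 0 ≤ c) (h : ∀ m : ℕ, 1 ≤ exp (c * (m : ℝ) ^ a) * S ^ m) : 1 ≤ S := by
  have hS : 0 < S := by
    have := h 1
    simp only [Nat.cast_one, one_rpow, mul_one, pow_one] at this
    exact pos_of_mul_pos_right (one_pos.trans_le this) (exp_pos c).le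
  by_contra! hS1
  have hlog : log S < 0 := log_neg hS hS1
  obtain ⟨B, hB⟩ := exists_mul_rpow_le_mul_add ha0 ha1 hc (by linarith : 0 < -log S / 2)
  obtain ⟨m, hm⟩ := exists_nat_gt (B / (-log S / 2))
  have hlog_nonneg : 0 ≤ c * (m : ℝ) ^ a + m * log S := by
    have := log_nonneg (h m)
    rwa [log_mul (exp_pos _).ne' (pow_pos hS m).ne', log_exp, log_pow] at this
  have := hB m m.cast_nonneg
  rw [div_lt_iff₀ (by linarith)] at hm
  nlinarith

section Moderate

variable {E : Type*}

def IsModerate [Add E] (w k : E → ℝ) : Prop :=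
  ∀ ξ η, k (ξ + η) ≤ w ξ * k η

theorem le_pow_mul_of_forall_add_le [AddMonoid E] {f : E → ℝ} {S : ℝ} {ξ : E} (hS : 0 ≤ S)
    (h : ∀ η, f (ξ + η) ≤ S * f η) (m : ℕ) : f (m • ξ) ≤ S ^ m * f 0 := by
  induction m with
  | zero => simp
  | succ m ih =>
    calc f ((m + 1) • ξ) = f (ξ + m • ξ) := by rw [succ_nsmul']
      _ ≤ S * (S ^ m * f 0) := (h _).trans (mul_le_mul_of_nonneg_left ih hS)
      _ = S ^ (m + 1) * f 0 := by ring

variable [SeminormedAddCommGroup E] {f w : E → ℝ}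

theorem IsModerate.bddAbove_range_div (hf : IsModerate w f) (hf0 : ∀ ξ, 0 < f ξ) (ξ : E) :
    BddAbove (range fun η => f (ξ + η) / f η) :=
  ⟨w ξ, forall_mem_range.2 fun η => (div_le_iff₀ (hf0 η)).2 (hf ξ η)⟩

theorem IsModerate.iSup_div_le (hf : IsModerate w f) (hf0 : ∀ ξ, 0 < f ξ) (ξ : E) :
    ⨆ η, f (ξ + η) / f η ≤ w ξ :=
  ciSup_le fun η => (div_le_iff₀ (hf0 η)).2 (hf ξ η)

theorem IsModerate.one_le_iSup_div {a lam : ℝ} (ha0 : 0 ≤ a) (ha1 : a < 1) (hlam : 0 ≤ lam)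
    (hf : IsModerate (fun ξ => exp (lam * ‖ξ‖ ^ a)) f) (hf0 : ∀ ξ, 0 < f ξ)
    {ξ : E} (hbdd : BddAbove (range fun η => f (ξ + η) / f η)) :
    1 ≤ ⨆ η, f (ξ + η) / f η := by
  set S := ⨆ η, f (ξ + η) / f η
  have hstep : ∀ η, f (ξ + η) ≤ S * f η := fun η =>
    (div_le_iff₀ (hf0 η)).1 (le_ciSup hbdd η)
  have hS : 0 ≤ S := (div_pos (hf0 _) (hf0 0)).le.trans (le_ciSup hbdd 0)
  refine one_le_of_forall_one_le_exp_mul_rpow_mul_pow ha0 ha1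
    (mul_nonneg hlam (rpow_nonneg (norm_nonneg ξ) a)) fun m => ?_
  have hback : f 0 ≤ exp (lam * ‖ξ‖ ^ a * (m : ℝ) ^ a) * f (m • ξ) := by
    have hnorm : ‖-(m • ξ)‖ ^ a ≤ ‖ξ‖ ^ a * (m : ℝ) ^ a := by
      rw [norm_neg, ← mul_rpow (norm_nonneg _) m.cast_nonneg, mul_comm ‖ξ‖]
      exact rpow_le_rpow (norm_nonneg _) norm_nsmul_le ha0
    calc f 0 = f (-(m • ξ) + m • ξ) := by rw [neg_add_cancel]
      _ ≤ _ := hf _ _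
      _ ≤ _ := by
        gcongr
        · exact (hf0 _).le
        · exact exp_le_exp.2 (by rw [mul_assoc]; gcongr)
  have := hback.trans (mul_le_mul_of_nonneg_left
    (le_pow_mul_of_forall_add_le hS hstep m) (exp_pos _).le)
  rw [← mul_assoc] at this
  exact (le_mul_iff_one_le_left (hf0 0)).1 this

/-- The smallest majorant of `k` whose logarithm is `δ`-Lipschitz. -/
noncomputable def logLipschitzEnvelope (δ : ℝ) (k : E → ℝ) (ξ : E) : ℝ :=
  ⨆ ζ, k ζ * exp (-(δ * ‖ξ - ζ‖))

variable {k : E → ℝ} {δ C : ℝ}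

theorem IsModerate.mul_exp_neg_le (hk : IsModerate w k) (hk0 : ∀ ξ, 0 ≤ k ξ)
    (hw : ∀ ξ, w ξ ≤ C * exp (δ * ‖ξ‖)) (ξ ζ : E) :
    k ζ * exp (-(δ * ‖ξ - ζ‖)) ≤ C * k ξ :=
  calc k ζ * exp (-(δ * ‖ξ - ζ‖)) ≤ C * exp (δ * ‖ζ - ξ‖) * k ξ * exp (-(δ * ‖ζ - ξ‖)) := by
        rw [norm_sub_rev]
        gcongr
        calc k ζ = k (ζ - ξ + ξ) := by rw [sub_add_cancel]
          _ ≤ w (ζ - ξ) * k ξ := hk _ _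
          _ ≤ _ := by gcongr; exacts [hk0 ξ, hw _]
    _ = C * k ξ := by
        rw [mul_right_comm, mul_assoc C, ← exp_add, add_neg_cancel, exp_zero, mul_one]

theorem IsModerate.logLipschitzEnvelope_le (hk : IsModerate w k) (hk0 : ∀ ξ, 0 ≤ k ξ)
    (hw : ∀ ξ, w ξ ≤ C * exp (δ * ‖ξ‖)) (ξ : E) : logLipschitzEnvelope δ k ξ ≤ C * k ξ :=
  ciSup_le (hk.mul_exp_neg_le hk0 hw ξ)

theorem le_logLipschitzEnvelope
    (hbdd : ∀ ξ, BddAbove (range fun ζ => k ζ * exp (-(δ * ‖ξ - ζ‖)))) (ξ : E) :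
    k ξ ≤ logLipschitzEnvelope δ k ξ := by
  simpa [logLipschitzEnvelope] using le_ciSup (hbdd ξ) ξ

theorem isModerate_logLipschitzEnvelope (hk : IsModerate w k) (hw0 : ∀ ξ, 0 ≤ w ξ)
    (hbdd : ∀ ξ, BddAbove (range fun ζ => k ζ * exp (-(δ * ‖ξ - ζ‖)))) :
    IsModerate w (logLipschitzEnvelope δ k) := fun ξ η =>
  ciSup_le fun ζ =>
    calc k ζ * exp (-(δ * ‖ξ + η - ζ‖))
        ≤ w ξ * k (ζ - ξ) * exp (-(δ * ‖η - (ζ - ξ)‖)) := by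
          rw [show ξ + η - ζ = η - (ζ - ξ) by abel]
          gcongr
          simpa using hk ξ (ζ - ξ)
      _ ≤ w ξ * logLipschitzEnvelope δ k η := by
          rw [mul_assoc]
          exact mul_le_mul_of_nonneg_left (le_ciSup (hbdd η) (ζ - ξ)) (hw0 ξ)

theorem isModerate_exp_logLipschitzEnvelope (hδ : 0 ≤ δ) (hk0 : ∀ ξ, 0 ≤ k ξ)
    (hbdd : ∀ ξ, BddAbove (range fun ζ => k ζ * exp (-(δ * ‖ξ - ζ‖)))) :
    IsModerate (fun ξ => exp (δ * ‖ξ‖)) (logLipschitzEnvelope δ k) := fun ξ η =>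
  ciSup_le fun ζ =>
    calc k ζ * exp (-(δ * ‖ξ + η - ζ‖)) ≤ exp (δ * ‖ξ‖) * (k ζ * exp (-(δ * ‖η - ζ‖))) := by
          rw [mul_left_comm, ← exp_add]
          gcongr
          · exact hk0 ζ
          · have := norm_sub_le (ξ + η - ζ) ξ
            rw [show ξ + η - ζ - ξ = η - ζ by abel] at this
            nlinarith
      _ ≤ exp (δ * ‖ξ‖) * logLipschitzEnvelope δ k η :=
          mul_le_mul_of_nonneg_left (le_ciSup (hbdd η) ζ) (exp_pos _).le

end Moderate

theorem stmt_5_general (n : ℕ) (σ lam : ℝ) (hσ : 1 < σ) (hlam : 0 < lam)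
    (k : EuclideanSpace ℝ (Fin n) → ℝ)
    (hkpos : ∀ ξ, 0 < k ξ)
    (hk : ∀ ξ η, k (ξ + η) ≤ Real.exp (lam * ‖ξ‖ ^ (1 / σ)) * k η)
    (δ : ℝ) (hδ : 0 < δ) :
    ∃ kδ : EuclideanSpace ℝ (Fin n) → ℝ, ∃ C : ℝ, 0 < C ∧
      (∀ ξ, 0 < kδ ξ) ∧
      (∀ ξ η, kδ (ξ + η) ≤ Real.exp (lam * ‖ξ‖ ^ (1 / σ)) * kδ η) ∧
      ∀ ξ : EuclideanSpace ℝ (Fin n),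
        (1 ≤ kδ ξ / k ξ ∧ kδ ξ / k ξ ≤ C) ∧
        (1 ≤ (⨆ η, kδ (ξ + η) / kδ η) ∧ (⨆ η, kδ (ξ + η) / kδ η) ≤ Real.exp (δ * ‖ξ‖)) := by
  have ha0 : 0 ≤ 1 / σ := by positivity
  have ha1 : 1 / σ < 1 := (div_lt_one (by linarith)).2 hσ
  have hk0 : ∀ ξ, 0 ≤ k ξ := fun ξ => (hkpos ξ).le
  obtain ⟨B, hB⟩ := exists_mul_rpow_le_mul_add ha0 ha1 hlam.le hδ
  have hw : ∀ ξ : EuclideanSpace ℝ (Fin n),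
      exp (lam * ‖ξ‖ ^ (1 / σ)) ≤ exp B * exp (δ * ‖ξ‖) := fun ξ => by
    rw [← exp_add]
    exact exp_le_exp.2 (by linarith [hB ‖ξ‖ (norm_nonneg ξ)])
  have hbdd : ∀ ξ, BddAbove (range fun ζ => k ζ * exp (-(δ * ‖ξ - ζ‖))) := fun ξ =>
    ⟨_, forall_mem_range.2 (IsModerate.mul_exp_neg_le hk hk0 hw ξ)⟩
  have hkδpos : ∀ ξ, 0 < logLipschitzEnvelope δ k ξ := fun ξ =>
    (hkpos ξ).trans_le (le_logLipschitzEnvelope hbdd ξ)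
  have hkδK := isModerate_logLipschitzEnvelope hk (fun ξ => (exp_pos _).le) hbdd
  have hkδLip := isModerate_exp_logLipschitzEnvelope hδ.le hk0 hbdd
  refine ⟨logLipschitzEnvelope δ k, exp B, exp_pos B, hkδpos, hkδK, fun ξ => ⟨⟨?_, ?_⟩, ?_, ?_⟩⟩
  · exact (one_le_div (hkpos ξ)).2 (le_logLipschitzEnvelope hbdd ξ)
  · exact (div_le_iff₀ (hkpos ξ)).2 (IsModerate.logLipschitzEnvelope_le hk hk0 hw ξ)
  · exact hkδK.one_le_iSup_div ha0 ha1 hlam.le hkδpos (hkδLip.bddAbove_range_div hkδpos ξ)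
  · exact hkδLip.iSup_div_le hkδpos ξ

theorem stmt_5 (n : ℕ) (hn : 1 ≤ n) (σ lam : ℝ) (hσ : 1 < σ) (hlam : 0 < lam)
    (k : EuclideanSpace ℝ (Fin n) → ℝ)
    (hkpos : ∀ ξ, 0 < k ξ)
    (hk : ∀ ξ η, k (ξ + η) ≤ Real.exp (lam * ‖ξ‖ ^ (1 / σ)) * k η)
    (δ : ℝ) (hδ : 0 < δ) :
    ∃ kδ : EuclideanSpace ℝ (Fin n) → ℝ, ∃ C : ℝ, 0 < C ∧
      (∀ ξ, 0 < kδ ξ) ∧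
      (∀ ξ η, kδ (ξ + η) ≤ Real.exp (lam * ‖ξ‖ ^ (1 / σ)) * kδ η) ∧
      ∀ ξ : EuclideanSpace ℝ (Fin n),
        (1 ≤ kδ ξ / k ξ ∧ kδ ξ / k ξ ≤ C) ∧
        (1 ≤ (⨆ η, kδ (ξ + η) / kδ η) ∧ (⨆ η, kδ (ξ + η) / kδ η) ≤ Real.exp (δ * ‖ξ‖)) :=
  stmt_5_general n σ lam hσ hlam k hkpos hk δ hδ
end

section
/- Let x₀ ∈ ℝ, r > 0, and reals b < b″ ≤ M and M₋ ≤ M₊ be given. Define the compact sets 𝒜 = {z ∈ ℂ : |Re z − x₀| ≤ r, b″ ≤ Im z ≤ M} and ℬ′ = {z ∈ ℂ : r/2 ≤ |Re z − x₀| ≤ r, min(M₋, b) ≤ Im z ≤ max(M₊, M)}, and for a > 0 and b′ ∈ ℝ define ℛ(a, b′) = {z ∈ ℂ : |Re z − x₀| ≤ a, b ≤ Im z ≤ b′}. Then there exist a ∈ (0, r/2), b′ ∈ (b, b″), and an entire function H : ℂ → ℂ such that Re H(z) > 0 for every z ∈ 𝒜 ∪ ℬ′ and Re H(z) < 0 for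 every z ∈ ℛ(a, b′). -/
/-!
With `t = π / r` and `w = x₀ + b' i`, the real part of `exp (i t (z - w))` is
`e^{-t (Im z - b')} cos (t (Re z - x₀))`. It is `≤ 0` on the side bars of the horseshoe, where
`t |Re z - x₀| ∈ [π/2, π]`; at most `e^{-t (b'' - b')} < 1` on the top bar; and at least `cos θ`,
which is close to `1`, on a rectangle of half-width `θ / t` below height `b'`. Hence
`H = c - exp (i t (z - w))` works for any `c` strictly between these two bounds.
-/

open Real Complex Filter Topology Set

section PlaneWave

variable {t θ : ℝ} {w z : ℂ}

theorem re_cexp_mul_I_mul_sub (t : ℝ) (w z : ℂ) :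
    (cexp (t * I * (z - w))).re = rexp (-(t * (z.im - w.im))) * Real.cos (t * (z.re - w.re)) := by
  simp [Complex.exp_re, Complex.mul_re, Complex.mul_im]

theorem re_cexp_mul_I_mul_sub_le (ht : 0 ≤ t) {s : ℝ} (hs : s ≤ z.im - w.im) :
    (cexp (t * I * (z - w))).re ≤ rexp (-(t * s)) := by
  rw [re_cexp_mul_I_mul_sub]
  calc rexp (-(t * (z.im - w.im))) * Real.cos (t * (z.re - w.re))
      ≤ rexp (-(t * (z.im - w.im))) := mul_le_of_le_one_right (exp_nonneg _) (cos_le_one _)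
    _ ≤ rexp (-(t * s)) := exp_le_exp.mpr (by nlinarith)

theorem re_cexp_mul_I_mul_sub_nonpos (ht : 0 ≤ t) (h₁ : π / 2 ≤ t * |z.re - w.re|)
    (h₂ : t * |z.re - w.re| ≤ π) : (cexp (t * I * (z - w))).re ≤ 0 := by
  have hcos : Real.cos (t * (z.re - w.re)) ≤ 0 := by
    rw [← Real.cos_abs, abs_mul, abs_of_nonneg ht]
    exact cos_nonpos_of_pi_div_two_le_of_le h₁ (by linarith [pi_pos])
  rw [re_cexp_mul_I_mul_sub]
  exact mul_nonpos_of_nonneg_of_nonpos (exp_nonneg _) hcos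

theorem cos_le_re_cexp_mul_I_mul_sub (ht : 0 ≤ t) (him : z.im ≤ w.im)
    (hθ : t * |z.re - w.re| ≤ θ) (hθπ : θ ≤ π / 2) :
    Real.cos θ ≤ (cexp (t * I * (z - w))).re := by
  have hθ₀ : 0 ≤ θ := le_trans (by positivity) hθ
  have hcos : Real.cos θ ≤ Real.cos (t * (z.re - w.re)) := by
    rw [← Real.cos_abs (t * _), abs_mul, abs_of_nonneg ht]
    exact cos_le_cos_of_nonneg_of_le_pi (by positivity) (by linarith [pi_pos]) hθ
  have hexp : 1 ≤ rexp (-(t * (z.im - w.im))) := one_le_exp (by nlinarith)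
  have hcosθ : 0 ≤ Real.cos θ := cos_nonneg_of_neg_pi_div_two_le_of_le (by linarith [pi_pos]) hθπ
  rw [re_cexp_mul_I_mul_sub]
  exact hcos.trans (le_mul_of_one_le_left (hcosθ.trans hcos) hexp)

end PlaneWave

theorem exists_mem_Ioo_lt_cos {c : ℝ} (hc : c < 1) : ∃ θ ∈ Ioo 0 (π / 2), c < Real.cos θ := by
  have hcos : ∀ᶠ θ in 𝓝[>] 0, c < Real.cos θ :=
    nhdsWithin_le_nhds <| continuousAt_const.eventually_lt continuous_cos.continuousAt (by simpa)
  have hsmall : ∀ᶠ θ in 𝓝[>] (0 : ℝ), θ ∈ Ioo 0 (π / 2) := Ioo_mem_nhdsGT (by positivity)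
  exact (hsmall.and hcos).exists

theorem stmt_12_general (x₀ r b b'' M Mm Mp : ℝ) (hr : 0 < r) (hb : b < b'') :
    ∃ a b' : ℝ, 0 < a ∧ a < r / 2 ∧ b < b' ∧ b' < b'' ∧
      ∃ H : ℂ → ℂ, (∀ z : ℂ, DifferentiableAt ℂ H z) ∧
        (∀ z ∈ ({z : ℂ | |z.re - x₀| ≤ r ∧ b'' ≤ z.im ∧ z.im ≤ M} ∪
                {z : ℂ | r / 2 ≤ |z.re - x₀| ∧ |z.re - x₀| ≤ r ∧
                  min Mm b ≤ z.im ∧ z.im ≤ max Mp M}),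
          0 < (H z).re) ∧
        (∀ z ∈ {z : ℂ | |z.re - x₀| ≤ a ∧ b ≤ z.im ∧ z.im ≤ b'}, (H z).re < 0) := by
  obtain ⟨b', hbb', hb'b''⟩ := exists_between hb
  obtain ⟨t, ht, htr⟩ : ∃ t, 0 < t ∧ t * r = π := ⟨π / r, by positivity, div_mul_cancel₀ _ hr.ne'⟩
  have hδ : rexp (-(t * (b'' - b'))) < 1 := exp_lt_one_iff.mpr (by nlinarith)
  obtain ⟨θ, ⟨hθ₀, hθπ⟩, hδθ⟩ := exists_mem_Ioo_lt_cos hδ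
  obtain ⟨c, hδc, hcθ⟩ := exists_between hδθ
  have hta : t * (θ / t) = θ := mul_div_cancel₀ θ ht.ne'
  refine ⟨θ / t, b', div_pos hθ₀ ht, ?_, hbb', hb'b'',
    fun z ↦ c - cexp (t * I * (z - ⟨x₀, b'⟩)), fun z ↦ by fun_prop, ?_, ?_⟩
  · rw [div_lt_iff₀ ht]
    nlinarith
  · rintro z (⟨-, hz, -⟩ | ⟨hz₁, hz₂, -, -⟩) <;> simp only [sub_re, ofReal_re, sub_pos]
    · calc (cexp (t * I * (z - ⟨x₀, b'⟩))).re ≤ rexp (-(t * (b'' - b'))) :=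
            re_cexp_mul_I_mul_sub_le ht.le (by simpa using hz)
        _ < c := hδc
    · calc (cexp (t * I * (z - ⟨x₀, b'⟩))).re ≤ 0 :=
            re_cexp_mul_I_mul_sub_nonpos ht.le (by nlinarith) (by nlinarith)
        _ < c := (exp_pos _).trans hδc
  · rintro z ⟨hz₁, -, hz₂⟩
    simp only [sub_re, ofReal_re, sub_neg]
    calc c < Real.cos θ := hcθ
      _ ≤ (cexp (t * I * (z - ⟨x₀, b'⟩))).re := cos_le_re_cexp_mul_I_mul_sub ht.le hz₂
          (hta ▸ mul_le_mul_of_nonneg_left hz₁ ht.le) hθπ.le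

theorem stmt_12 (x₀ r b b'' M Mm Mp : ℝ) (hr : 0 < r) (hb : b < b'')
    (hbM : b'' ≤ M) (hMm : Mm ≤ Mp) :
    ∃ a b' : ℝ, 0 < a ∧ a < r / 2 ∧ b < b' ∧ b' < b'' ∧
      ∃ H : ℂ → ℂ, (∀ z : ℂ, DifferentiableAt ℂ H z) ∧
        (∀ z ∈ ({z : ℂ | |z.re - x₀| ≤ r ∧ b'' ≤ z.im ∧ z.im ≤ M} ∪
                {z : ℂ | r / 2 ≤ |z.re - x₀| ∧ |z.re - x₀| ≤ r ∧
                  min Mm b ≤ z.im ∧ z.im ≤ max Mp M}),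
          0 < (H z).re) ∧
        (∀ z ∈ {z : ℂ | |z.re - x₀| ≤ a ∧ b ≤ z.im ∧ z.im ≤ b'}, (H z).re < 0) :=
  stmt_12_general x₀ r b b'' M Mm Mp hr hb
end
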